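/- Let A, M, N, B be complex matrices of sizes A : μ×(2ν), M : ν×(2ν), N : μ×μ, B : ν×μ, with N diagonal, real, and M Mᵀ = D invertible diagonal, A Mᵀ = 0, A Aᵀ = 0. If additionally M A^T = 0 (Takagi condition) and A† N + M† B = 0 and A* Mᵀ + 2 N Bᵀ = 0 hold, then B = 0 and the rows of A corresponding to strictly positive diagonal entries of N vanish. -/

import Mathlib

open Matrix

/-!
Taking the conjugate transpose of `Aᴴ N + Mᴴ B = 0` gives `N A + Bᴴ M = 0`, since `N` is real
diagonal. Multiplying on the right by `Mᵀ` and using `A Mᵀ = 0`, `M Mᵀ = D` leaves `Bᴴ D = 0`,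
so `B = 0` because `D` is invertible. Then `Aᴴ N = 0`, which kills the columns of `Aᴴ`, i.e. the
rows of `A`, at the nonzero diagonal entries of `N`.
-/

theorem Matrix.apply_eq_zero_of_mul_diagonal_eq_zero {m n R : Type*} [Fintype n] [DecidableEq n]
    [NonUnitalNonAssocSemiring R] [NoZeroDivisors R] {X : Matrix m n R} {v : n → R}
    (h : X * diagonal v = 0) {j : n} (hj : v j ≠ 0) (i : m) : X i j = 0 := by
  have hij := congrFun (congrFun h i) j
  rw [mul_diagonal, zero_apply] at hij
  exact (mul_eq_zero.mp hij).resolve_right hj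

theorem stmt9 (μ ν : ℕ)
    (A : Matrix (Fin μ) (Fin (2 * ν)) ℂ) (M : Matrix (Fin ν) (Fin (2 * ν)) ℂ)
    (B : Matrix (Fin ν) (Fin μ) ℂ) (d : Fin μ → ℝ) (e : Fin ν → ℝ)
    (he : ∀ i, 0 < e i)
    (hMM : M * Mᵀ = Matrix.diagonal (fun i => (e i : ℂ)))
    (hAM : A * Mᵀ = 0)
    (hAN : Aᴴ * (Matrix.diagonal fun i => (d i : ℂ)) + Mᴴ * B = 0) :
    B = 0 ∧ ∀ i, 0 < d i → ∀ r, A i r = 0 := by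
  set N : Matrix (Fin μ) (Fin μ) ℂ := diagonal fun i => (d i : ℂ)
  have hNA : N * A + Bᴴ * M = 0 := by
    simpa [N, conjTranspose_mul, Pi.star_def] using congrArg conjTranspose hAN
  have hBD : Bᴴ * diagonal (fun i => (e i : ℂ)) = 0 :=
    calc Bᴴ * diagonal (fun i => (e i : ℂ))
        = (N * A + Bᴴ * M) * Mᵀ - N * (A * Mᵀ) := by
          rw [Matrix.add_mul, Matrix.mul_assoc N, Matrix.mul_assoc Bᴴ, hMM, add_sub_cancel_left]
      _ = 0 := by rw [hNA, hAM]; simp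
  have hB : B = 0 := by
    refine conjTranspose_eq_zero.mp (Matrix.ext fun r i => ?_)
    exact apply_eq_zero_of_mul_diagonal_eq_zero hBD (Complex.ofReal_ne_zero.mpr (he i).ne') r
  refine ⟨hB, fun i hdi r => ?_⟩
  have hAN' : Aᴴ * N = 0 := by simpa [hB] using hAN
  simpa using congrArg star
    (apply_eq_zero_of_mul_diagonal_eq_zero hAN' (Complex.ofReal_ne_zero.mpr hdi.ne') r)
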